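/- arXiv:2601.01731 — 3 statements merged into one kernel-verified Lean document; each statement's English description precedes it below -/
import Mathlib

section
/- On the Cartesian torus grid, let κ > 0, Δt > 0, let B satisfy hypotheses (H2) and (H3) with α ∈ [0,1), and let W^{ij}_{KJ} (i,j = 1,…,n; K,J ∈ G) be real numbers that are symmetric (W^{ij}_{KJ} = W^{ji}_{JK}) and positive semidefinite in the discrete sense (∑_{i,j=1}^n ∑_{K,J∈G} m(K)·m(J)·W^{ij}_{KJ}·v_i(K)·v_j(J) ≥ 0 for all families v_i : G → ℝ). Suppose u^{k−1}_i, u^k_i : G → [0,∞) satisfy one implicit Euler finite-volume step with the fully implicit potentials p^k_i(K) = ∑_{j=1}^n ∑_{J∈G} m(J)·W^{ij}_{KJ}·u^k_j(J). Then the discrete Rao entropy inequality holds: (1/Δt)·(H_R(u^k) − H_R(u^{k−1})) + (1−α)·P_R(u^k, p^k) ≤ −κ·X(u^k, p^k). -/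
open MeasureTheory Real Finset

namespace SG

instance : Fact ((0:ℝ) < 1) := ⟨one_pos⟩

variable {d : ℕ}

/-- Cells of the Cartesian torus grid. -/
abbrev Cell (M : Fin d → ℕ) := ∀ ℓ : Fin d, ZMod (M ℓ)

/-- Cell measure `m(K) = Δx₁⋯Δx_d`. -/
noncomputable def mK (M : Fin d → ℕ) : ℝ := ∏ ℓ, ((M ℓ : ℝ))⁻¹

/-- Transmissibility coefficient of an edge in direction `ℓ`:
`τ_σ = m(σ)/d_σ = m(K)·M_ℓ²`. -/
noncomputable def τ (M : Fin d → ℕ) (ℓ : Fin d) : ℝ := mK M * (M ℓ : ℝ) ^ 2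

/-- Shift a cell by `s` in direction `ℓ` (mod `M ℓ`). -/
def shift (M : Fin d → ℕ) (K : Cell M) (ℓ : Fin d) (s : ℤ) : Cell M :=
  Function.update K ℓ (K ℓ + (s : ZMod (M ℓ)))

/-- Hypothesis (H2): `B` is continuous on `[0,∞)` with `0 < B(s) ≤ 1` for `s ≥ 0`. -/
def H2 (B : ℝ → ℝ) : Prop :=
  ContinuousOn B (Set.Ici 0) ∧ ∀ s : ℝ, 0 ≤ s → 0 < B s ∧ B s ≤ 1

/-- Hypothesis (H3): `α ∈ [0,1)` and `B(s) ≥ 1 − α·s` for all `s ≥ 0`. -/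
def H3 (B : ℝ → ℝ) (α : ℝ) : Prop :=
  0 ≤ α ∧ α < 1 ∧ ∀ s : ℝ, 0 ≤ s → 1 - α * s ≤ B s

/-- The scaled weight function `B_κ(s) = κ·B(s/κ)`. -/
noncomputable def Bk (κ : ℝ) (B : ℝ → ℝ) (s : ℝ) : ℝ := κ * B (s / κ)

/-- Upwind value on the (oriented) edge from `K` to `L`. -/
noncomputable def upw {M : Fin d → ℕ} (u p : Cell M → ℝ) (K L : Cell M) : ℝ :=
  if 0 ≤ p L - p K then u L else u K

/-- Numerical flux `F_{K,σ}[u,p]` from `K` through the edge (in direction `ℓ`) to its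
neighbor `L`. -/
noncomputable def flux (M : Fin d → ℕ) (κ : ℝ) (B : ℝ → ℝ) (u p : Cell M → ℝ)
    (ℓ : Fin d) (K L : Cell M) : ℝ :=
  -(τ M ℓ) * (Bk κ B |p L - p K| * (u L - u K) + upw u p K L * (p L - p K))

/-- Sum of the numerical fluxes over the `2d` edges incident to `K`. -/
noncomputable def fluxSum (M : Fin d → ℕ) (κ : ℝ) (B : ℝ → ℝ) (u p : Cell M → ℝ)
    (K : Cell M) : ℝ :=
  ∑ ℓ : Fin d, (flux M κ B u p ℓ K (shift M K ℓ 1) + flux M κ B u p ℓ K (shift M K ℓ (-1)))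

/-- One implicit Euler finite-volume step with prescribed potential `p`. -/
def Step (M : Fin d → ℕ) (κ Δt : ℝ) (B : ℝ → ℝ) (uPrev u p : Cell M → ℝ) : Prop :=
  ∀ K : Cell M, mK M * (u K - uPrev K) / Δt + fluxSum M κ B u p K = 0

/-- Discrete Boltzmann entropy. -/
noncomputable def HB (M : Fin d → ℕ) [∀ ℓ, NeZero (M ℓ)] {n : ℕ}
    (u : Fin n → Cell M → ℝ) : ℝ :=
  ∑ i, ∑ K : Cell M, mK M * (u i K * (Real.log (u i K) - 1))

/-- Discrete Rao entropy associated to discrete kernels `Wd`. -/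
noncomputable def HR (M : Fin d → ℕ) [∀ ℓ, NeZero (M ℓ)] {n : ℕ}
    (Wd : Fin n → Fin n → Cell M → Cell M → ℝ) (u : Fin n → Cell M → ℝ) : ℝ :=
  (1/2) * ∑ i, ∑ j, ∑ K : Cell M, ∑ J : Cell M,
    mK M * mK M * Wd i j K J * u i K * u j J

/-- Boltzmann entropy production term `P_B`. -/
noncomputable def PB (M : Fin d → ℕ) [∀ ℓ, NeZero (M ℓ)] {n : ℕ} (κ : ℝ) (B : ℝ → ℝ)
    (u p : Fin n → Cell M → ℝ) : ℝ :=
  4 * ∑ i, ∑ K : Cell M, ∑ ℓ : Fin d,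
    τ M ℓ * Bk κ B |p i (shift M K ℓ 1) - p i K| *
      (Real.sqrt (u i (shift M K ℓ 1)) - Real.sqrt (u i K)) ^ 2

/-- Rao entropy production term `P_R`. -/
noncomputable def PR (M : Fin d → ℕ) [∀ ℓ, NeZero (M ℓ)] {n : ℕ}
    (u p : Fin n → Cell M → ℝ) : ℝ :=
  ∑ i, ∑ K : Cell M, ∑ ℓ : Fin d,
    τ M ℓ * upw (u i) (p i) K (shift M K ℓ 1) * (p i (shift M K ℓ 1) - p i K) ^ 2

/-- Cross term `X(u,p)`. -/
noncomputable def Xc (M : Fin d → ℕ) [∀ ℓ, NeZero (M ℓ)] {n : ℕ}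
    (u p : Fin n → Cell M → ℝ) : ℝ :=
  ∑ i, ∑ K : Cell M, ∑ ℓ : Fin d,
    τ M ℓ * (p i (shift M K ℓ 1) - p i K) * (u i (shift M K ℓ 1) - u i K)

/-- Discrete Fisher information `∑_i ∑_σ τ_σ |D_σ √u_i|²`. -/
noncomputable def Fisher (M : Fin d → ℕ) [∀ ℓ, NeZero (M ℓ)] {n : ℕ}
    (u : Fin n → Cell M → ℝ) : ℝ :=
  ∑ i, ∑ K : Cell M, ∑ ℓ : Fin d,
    τ M ℓ * (Real.sqrt (u i (shift M K ℓ 1)) - Real.sqrt (u i K)) ^ 2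

/-- The torus `T^d = (ℝ/ℤ)^d`. -/
abbrev Td (d : ℕ) := Fin d → AddCircle (1 : ℝ)

/-- The box `Q_K ⊆ T^d` corresponding to the cell `K`. -/
noncomputable def QK (M : Fin d → ℕ) (K : Cell M) : Set (Td d) :=
  Set.univ.pi fun ℓ => (fun t : ℝ => (t : AddCircle (1 : ℝ))) ''
    Set.Ico (((K ℓ).val : ℝ) / (M ℓ)) ((((K ℓ).val : ℝ) + 1) / (M ℓ))

/-- The discrete kernel `W_{KJ} = (m(K)m(J))⁻¹ ∫_{Q_K}∫_{Q_J} W(x−y) dy dx`. -/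
noncomputable def Wdisc (M : Fin d → ℕ) (W : Td d → ℝ) (K J : Cell M) : ℝ :=
  (mK M * mK M)⁻¹ * ∫ x in QK M K, ∫ y in QK M J, W (x - y)

/-- The discrete nonlocal potential `p_i(K) = ∑_j ∑_J m(J)·Wd^{ij}_{KJ}·u_j(J)`. -/
noncomputable def pot (M : Fin d → ℕ) [∀ ℓ, NeZero (M ℓ)] {n : ℕ}
    (Wd : Fin n → Fin n → Cell M → Cell M → ℝ) (u : Fin n → Cell M → ℝ)
    (i : Fin n) (K : Cell M) : ℝ :=
  ∑ j, ∑ J : Cell M, mK M * Wd i j K J * u j J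

/-- Discrete `L^q` norm of a cell function. -/
noncomputable def normq (M : Fin d → ℕ) [∀ ℓ, NeZero (M ℓ)] (q : ℝ)
    (u : Cell M → ℝ) : ℝ :=
  (∑ K : Cell M, mK M * |u K| ^ q) ^ (1/q)

/-- Discrete `L^q` norm of an edge function (dual-cell measure `m(Δ_σ) = m(σ)·d_σ = m(K)`). -/
noncomputable def enorm (M : Fin d → ℕ) [∀ ℓ, NeZero (M ℓ)] (q : ℝ)
    (w : Cell M → Fin d → ℝ) : ℝ :=
  (∑ K : Cell M, ∑ ℓ : Fin d, mK M * |w K ℓ| ^ q) ^ (1/q)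

/-- Magnitude of the discrete gradient on the edge `(K,ℓ)`:
`|∇^h_σ v| = d·D_σ v/d_σ`. -/
noncomputable def gradh (M : Fin d → ℕ) (v : Cell M → ℝ) (K : Cell M) (ℓ : Fin d) : ℝ :=
  d * (M ℓ : ℝ) * |v (shift M K ℓ 1) - v K|



/-- Shifting by `a` then by `-a` returns to the original cell. -/
lemma shift_cancel (M : Fin d → ℕ) (K : Cell M) (ℓ : Fin d) (a : ℤ) :
    shift M (shift M K ℓ a) ℓ (-a) = K := by
  funext x
  by_cases h : x = ℓ
  · subst h; simp [shift]
  · simp [shift, Function.update_of_ne h]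

/-- The shift by one in direction `ℓ` as an equivalence of the cell set. -/
def shEq (M : Fin d → ℕ) (ℓ : Fin d) : Cell M ≃ Cell M where
  toFun K := shift M K ℓ 1
  invFun K := shift M K ℓ (-1)
  left_inv K := shift_cancel M K ℓ 1
  right_inv K := by simpa using shift_cancel M K ℓ (-1)

/-- Antisymmetry of the numerical flux. -/
lemma flux_antisymm (M : Fin d → ℕ) (κ : ℝ) (B : ℝ → ℝ) (u p : Cell M → ℝ)
    (ℓ : Fin d) (K L : Cell M) :
    flux M κ B u p ℓ L K = - flux M κ B u p ℓ K L := by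
  unfold flux upw
  rw [abs_sub_comm (p K) (p L)]
  split_ifs with h1 h2 h2
  · have h : p L - p K = 0 := le_antisymm (by linarith) h2
    linear_combination (τ M ℓ * (u K - u L)) * h
  · ring
  · ring
  · linarith

/-- Scalar edgewise estimate. -/
lemma scalar_est (κ α b x y s τ' : ℝ) (hα : 0 ≤ α) (hx : 0 ≤ x) (hy : 0 ≤ y)
    (hτ : 0 ≤ τ') (hb1 : b ≤ κ) (hb2 : κ - α * |s| ≤ b) :
    (1 - α) * (τ' * (if 0 ≤ s then y else x) * s ^ 2) + κ * (τ' * s * (y - x))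
      ≤ τ' * (s * (b * (y - x) + (if 0 ≤ s then y else x) * s)) := by
  split_ifs with hs
  · rw [abs_of_nonneg hs] at hb2
    nlinarith [mul_nonneg (mul_nonneg hτ (sub_nonneg.2 hb1)) (mul_nonneg hs hx),
      mul_nonneg (mul_nonneg hτ (by linarith : (0:ℝ) ≤ α * s - (κ - b))) (mul_nonneg hs hy)]
  · push_neg at hs
    rw [abs_of_neg hs] at hb2
    nlinarith [mul_nonneg (mul_nonneg hτ (sub_nonneg.2 hb1)) (mul_nonneg (neg_nonneg.2 hs.le) hy),
      mul_nonneg (mul_nonneg hτ (by linarith : (0:ℝ) ≤ α * (-s) - (κ - b)))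
        (mul_nonneg (neg_nonneg.2 hs.le) hx)]

/-- Discrete summation by parts. -/
lemma sbp (M : Fin d → ℕ) [∀ ℓ, NeZero (M ℓ)] (κ : ℝ) (B : ℝ → ℝ) (u p : Cell M → ℝ) :
    ∑ K : Cell M, p K * fluxSum M κ B u p K
      = ∑ K : Cell M, ∑ ℓ : Fin d,
          (p K - p (shift M K ℓ 1)) * flux M κ B u p ℓ K (shift M K ℓ 1) := by
  have key : ∀ ℓ : Fin d,
      ∑ K : Cell M, (p K * flux M κ B u p ℓ K (shift M K ℓ 1)
        + p K * flux M κ B u p ℓ K (shift M K ℓ (-1)))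
      = ∑ K : Cell M, (p K - p (shift M K ℓ 1)) * flux M κ B u p ℓ K (shift M K ℓ 1) := by
    intro ℓ
    have re : ∑ K : Cell M, p K * flux M κ B u p ℓ K (shift M K ℓ (-1))
        = ∑ K : Cell M, p (shift M K ℓ 1) * (- flux M κ B u p ℓ K (shift M K ℓ 1)) := by
      rw [← Equiv.sum_comp (shEq M ℓ)
        (fun K => p K * flux M κ B u p ℓ K (shift M K ℓ (-1)))]
      refine Finset.sum_congr rfl fun K _ => ?_
      show p (shift M K ℓ 1) * flux M κ B u p ℓ (shift M K ℓ 1)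
          (shift M (shift M K ℓ 1) ℓ (-1)) = _
      rw [shift_cancel M K ℓ 1, flux_antisymm]
    rw [Finset.sum_add_distrib, re, ← Finset.sum_add_distrib]
    exact Finset.sum_congr rfl fun K _ => by ring
  calc ∑ K : Cell M, p K * fluxSum M κ B u p K
      = ∑ K : Cell M, ∑ ℓ : Fin d, (p K * flux M κ B u p ℓ K (shift M K ℓ 1)
          + p K * flux M κ B u p ℓ K (shift M K ℓ (-1))) := by
        simp only [fluxSum, Finset.mul_sum, mul_add]
    _ = ∑ ℓ : Fin d, ∑ K : Cell M, (p K * flux M κ B u p ℓ K (shift M K ℓ 1)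
          + p K * flux M κ B u p ℓ K (shift M K ℓ (-1))) := Finset.sum_comm
    _ = ∑ ℓ : Fin d, ∑ K : Cell M,
          (p K - p (shift M K ℓ 1)) * flux M κ B u p ℓ K (shift M K ℓ 1) :=
        Finset.sum_congr rfl fun ℓ _ => key ℓ
    _ = _ := Finset.sum_comm

/-- The symmetric bilinear form associated to the discrete kernels. -/
noncomputable def Qf (M : Fin d → ℕ) [∀ ℓ, NeZero (M ℓ)] {n : ℕ}
    (Wd : Fin n → Fin n → Cell M → Cell M → ℝ) (v w : Fin n → Cell M → ℝ) : ℝ :=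
  ∑ i, ∑ j, ∑ K : Cell M, ∑ J : Cell M, mK M * mK M * Wd i j K J * v i K * w j J

lemma Qf_symm (M : Fin d → ℕ) [∀ ℓ, NeZero (M ℓ)] {n : ℕ}
    (Wd : Fin n → Fin n → Cell M → Cell M → ℝ)
    (hsym : ∀ i j K J, Wd i j K J = Wd j i J K) (v w : Fin n → Cell M → ℝ) :
    Qf M Wd v w = Qf M Wd w v := by
  unfold Qf
  rw [Finset.sum_comm]
  refine Finset.sum_congr rfl fun j _ => Finset.sum_congr rfl fun i _ => ?_
  rw [Finset.sum_comm]
  refine Finset.sum_congr rfl fun J _ => Finset.sum_congr rfl fun K _ => ?_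
  rw [hsym i j K J]; ring

/-- Convexity estimate for the Rao entropy. -/
lemma quad_est (M : Fin d → ℕ) [∀ ℓ, NeZero (M ℓ)] {n : ℕ}
    (Wd : Fin n → Fin n → Cell M → Cell M → ℝ)
    (hsym : ∀ i j K J, Wd i j K J = Wd j i J K)
    (hpsd : ∀ v : Fin n → Cell M → ℝ,
      0 ≤ ∑ i, ∑ j, ∑ K : Cell M, ∑ J : Cell M,
            mK M * mK M * Wd i j K J * v i K * v j J)
    (uprev u : Fin n → Cell M → ℝ) :
    HR M Wd u - HR M Wd uprev
      ≤ ∑ i, ∑ K : Cell M, mK M * (u i K - uprev i K) * pot M Wd u i K := by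
  have hsub1 : ∀ v w x : Fin n → Cell M → ℝ,
      Qf M Wd (fun i K => v i K - w i K) x = Qf M Wd v x - Qf M Wd w x := by
    intro v w x
    simp only [Qf, mul_sub, sub_mul, Finset.sum_sub_distrib]
  have hsub2 : ∀ x v w : Fin n → Cell M → ℝ,
      Qf M Wd x (fun i K => v i K - w i K) = Qf M Wd x v - Qf M Wd x w := by
    intro x v w
    simp only [Qf, mul_sub, sub_mul, Finset.sum_sub_distrib]
  have hps : (0:ℝ) ≤ Qf M Wd (fun i K => u i K - uprev i K) (fun i K => u i K - uprev i K) :=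
    hpsd _
  have hrhs : ∑ i, ∑ K : Cell M, mK M * (u i K - uprev i K) * pot M Wd u i K
      = Qf M Wd (fun i K => u i K - uprev i K) u := by
    simp only [pot, Qf, Finset.mul_sum]
    refine Finset.sum_congr rfl fun i _ => ?_
    rw [Finset.sum_comm]
    exact Finset.sum_congr rfl fun j _ => Finset.sum_congr rfl fun K _ =>
      Finset.sum_congr rfl fun J _ => by ring
  have e1 : HR M Wd u = (1/2) * Qf M Wd u u := rfl
  have e2 : HR M Wd uprev = (1/2) * Qf M Wd uprev uprev := rfl
  have hQs : Qf M Wd uprev u = Qf M Wd u uprev := Qf_symm M Wd hsym uprev u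
  have expand : Qf M Wd (fun i K => u i K - uprev i K) (fun i K => u i K - uprev i K)
      = Qf M Wd u u - Qf M Wd uprev u - (Qf M Wd uprev u - Qf M Wd uprev uprev) := by
    rw [hsub1, hsub2, hsub2, hQs]
  have expand2 : Qf M Wd (fun i K => u i K - uprev i K) u
      = Qf M Wd u u - Qf M Wd uprev u := hsub1 u uprev u
  rw [hrhs, expand2, e1, e2]
  rw [expand] at hps
  linarith


/-- discrete Rao entropy inequality for the fully implicit potentials,
assuming symmetric, positive semidefinite discrete kernels. -/
theorem discrete_rao_entropy_inequality_implicit {d n : ℕ} (M : Fin d → ℕ)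
    [∀ ℓ, NeZero (M ℓ)]
    (κ Δt : ℝ) (hκ : 0 < κ) (hΔt : 0 < Δt)
    (B : ℝ → ℝ) (α : ℝ) (hB : H2 B) (hB3 : H3 B α)
    (Wd : Fin n → Fin n → Cell M → Cell M → ℝ)
    (hsym : ∀ i j K J, Wd i j K J = Wd j i J K)
    (hpsd : ∀ v : Fin n → Cell M → ℝ,
      0 ≤ ∑ i, ∑ j, ∑ K : Cell M, ∑ J : Cell M,
            mK M * mK M * Wd i j K J * v i K * v j J)
    (uprev u : Fin n → Cell M → ℝ)
    (hprev : ∀ i K, 0 ≤ uprev i K) (hu : ∀ i K, 0 ≤ u i K)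
    (hstep : ∀ i, Step M κ Δt B (uprev i) (u i) (pot M Wd u i)) :
    (1/Δt) * (HR M Wd u - HR M Wd uprev) + (1 - α) * PR M u (pot M Wd u)
      ≤ -(κ * Xc M u (pot M Wd u)) := by
  have hτ : ∀ ℓ : Fin d, 0 ≤ τ M ℓ := by
    intro ℓ; unfold τ mK; positivity
  have hb1 : ∀ s : ℝ, Bk κ B |s| ≤ κ := by
    intro s
    have h := (hB.2 (|s|/κ) (by positivity)).2
    have h2 := mul_le_mul_of_nonneg_left h hκ.le
    simpa [Bk] using h2
  have hb2 : ∀ s : ℝ, κ - α * |s| ≤ Bk κ B |s| := by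
    intro s
    have h3 := hB3.2.2 (|s|/κ) (by positivity)
    have h4 := mul_le_mul_of_nonneg_left h3 hκ.le
    have e : κ * (1 - α * (|s| / κ)) = κ - α * |s| := by field_simp
    unfold Bk
    linarith
  have hterm : ∀ (i : Fin n) (K : Cell M) (ℓ : Fin d),
      (1 - α) * (τ M ℓ * upw (u i) (pot M Wd u i) K (shift M K ℓ 1)
          * (pot M Wd u i (shift M K ℓ 1) - pot M Wd u i K) ^ 2)
        + κ * (τ M ℓ * (pot M Wd u i (shift M K ℓ 1) - pot M Wd u i K)
          * (u i (shift M K ℓ 1) - u i K))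
      ≤ (pot M Wd u i K - pot M Wd u i (shift M K ℓ 1))
          * flux M κ B (u i) (pot M Wd u i) ℓ K (shift M K ℓ 1) := by
    intro i K ℓ
    have h := scalar_est κ α (Bk κ B |pot M Wd u i (shift M K ℓ 1) - pot M Wd u i K|)
      (u i K) (u i (shift M K ℓ 1)) (pot M Wd u i (shift M K ℓ 1) - pot M Wd u i K)
      (τ M ℓ) hB3.1 (hu i K) (hu i _) (hτ ℓ) (hb1 _) (hb2 _)
    have h2 : (pot M Wd u i K - pot M Wd u i (shift M K ℓ 1))
          * flux M κ B (u i) (pot M Wd u i) ℓ K (shift M K ℓ 1)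
        = τ M ℓ * ((pot M Wd u i (shift M K ℓ 1) - pot M Wd u i K)
            * (Bk κ B |pot M Wd u i (shift M K ℓ 1) - pot M Wd u i K|
                * (u i (shift M K ℓ 1) - u i K)
              + upw (u i) (pot M Wd u i) K (shift M K ℓ 1)
                * (pot M Wd u i (shift M K ℓ 1) - pot M Wd u i K))) := by
      simp only [flux]; ring
    rw [h2]
    simp only [upw]
    exact h
  have hmain : (1 - α) * PR M u (pot M Wd u) + κ * Xc M u (pot M Wd u)
      ≤ ∑ i, ∑ K : Cell M, pot M Wd u i K * fluxSum M κ B (u i) (pot M Wd u i) K := by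
    calc (1 - α) * PR M u (pot M Wd u) + κ * Xc M u (pot M Wd u)
        = ∑ i, ∑ K : Cell M, ∑ ℓ : Fin d,
            ((1 - α) * (τ M ℓ * upw (u i) (pot M Wd u i) K (shift M K ℓ 1)
                * (pot M Wd u i (shift M K ℓ 1) - pot M Wd u i K) ^ 2)
              + κ * (τ M ℓ * (pot M Wd u i (shift M K ℓ 1) - pot M Wd u i K)
                * (u i (shift M K ℓ 1) - u i K))) := by
          simp only [PR, Xc, Finset.mul_sum, ← Finset.sum_add_distrib]
      _ ≤ ∑ i, ∑ K : Cell M, ∑ ℓ : Fin d,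
            (pot M Wd u i K - pot M Wd u i (shift M K ℓ 1))
              * flux M κ B (u i) (pot M Wd u i) ℓ K (shift M K ℓ 1) :=
          Finset.sum_le_sum fun i _ => Finset.sum_le_sum fun K _ =>
            Finset.sum_le_sum fun ℓ _ => hterm i K ℓ
      _ = _ := Finset.sum_congr rfl fun i _ => (sbp M κ B (u i) (pot M Wd u i)).symm
  have hst : ∑ i, ∑ K : Cell M, mK M * (u i K - uprev i K) * pot M Wd u i K
      = -Δt * ∑ i, ∑ K : Cell M, pot M Wd u i K * fluxSum M κ B (u i) (pot M Wd u i) K := by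
    rw [Finset.mul_sum]
    refine Finset.sum_congr rfl fun i _ => ?_
    rw [Finset.mul_sum]
    refine Finset.sum_congr rfl fun K _ => ?_
    have h := hstep i K
    have h' : mK M * (u i K - uprev i K)
        = -Δt * fluxSum M κ B (u i) (pot M Wd u i) K := by
      field_simp [hΔt.ne'] at h
      linarith
    linear_combination (pot M Wd u i K) * h'
  have hq := quad_est M Wd hsym hpsd uprev u
  have hchain : HR M Wd u - HR M Wd uprev
      ≤ -Δt * ∑ i, ∑ K : Cell M, pot M Wd u i K * fluxSum M κ B (u i) (pot M Wd u i) K :=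
    hq.trans (le_of_eq hst)
  have h1 : (1/Δt) * (HR M Wd u - HR M Wd uprev)
      ≤ -(∑ i, ∑ K : Cell M, pot M Wd u i K * fluxSum M κ B (u i) (pot M Wd u i) K) := by
    have h2 := mul_le_mul_of_nonneg_left hchain (by positivity : (0:ℝ) ≤ 1/Δt)
    have e : (1/Δt) * (-Δt * ∑ i, ∑ K : Cell M,
        pot M Wd u i K * fluxSum M κ B (u i) (pot M Wd u i) K)
        = -(∑ i, ∑ K : Cell M, pot M Wd u i K * fluxSum M κ B (u i) (pot M Wd u i) K) := by
      field_simp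
    linarith
  linarith

end SG
end

section
/- On the Cartesian torus grid, let κ > 0 and let B satisfy hypotheses (H2) and (H3) with α ∈ [0,1). Then for all families u_i : G → [0,∞) and p_i : G → ℝ (i = 1,…,n), the discrete Fisher information is controlled by the entropy production terms: κ·(1−α)·∑_{i=1}^n ∑_{σ∈E} τ_σ·|D_σ √u_i|² ≤ (1/4)·P_B(u,p) + (α/κ)·P_R(u,p) − α·X(u,p). -/
open MeasureTheory Real Finset

namespace SG

variable {d : ℕ}

private lemma tau_nonneg (M : Fin d → ℕ) (ℓ : Fin d) : 0 ≤ τ M ℓ := by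
  apply mul_nonneg
  · exact Finset.prod_nonneg fun i _ => inv_nonneg.mpr (Nat.cast_nonneg _)
  · positivity

private lemma edge_ineq (κ α b q uK uL : ℝ) (hκ : 0 < κ) (hα : 0 ≤ α)
    (hb : κ - α * |q| ≤ b) (huK : 0 ≤ uK) (huL : 0 ≤ uL) :
    κ * (1 - α) * (Real.sqrt uL - Real.sqrt uK) ^ 2
      ≤ b * (Real.sqrt uL - Real.sqrt uK) ^ 2
        + α / κ * ((if 0 ≤ q then uL else uK) * q ^ 2)
        - α * (q * (uL - uK)) := by
  set L := Real.sqrt uL with hL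
  set K := Real.sqrt uK with hK
  have hLnn : 0 ≤ L := Real.sqrt_nonneg _
  have hKnn : 0 ≤ K := Real.sqrt_nonneg _
  have hL2 : L ^ 2 = uL := Real.sq_sqrt huL
  have hK2 : K ^ 2 = uK := Real.sq_sqrt huK
  have hsq : 0 ≤ (L - K) ^ 2 := sq_nonneg _
  have h1 : (κ - α * |q|) * (L - K) ^ 2 ≤ b * (L - K) ^ 2 :=
    mul_le_mul_of_nonneg_right hb hsq
  have key : 0 ≤ α * (κ * (L - K) ^ 2 - |q| * (L - K) ^ 2
      + (if 0 ≤ q then uL else uK) * q ^ 2 / κ - q * (uL - uK)) := by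
    apply mul_nonneg hα
    rw [← hL2, ← hK2]
    have hκ' : (0:ℝ) < κ := hκ
    by_cases hq : 0 ≤ q
    · simp only [if_pos hq]
      rw [abs_of_nonneg hq]
      have h2 : 0 ≤ (q * L - κ * (L - K)) ^ 2 := sq_nonneg _
      have h3 : κ * (κ * (L - K) ^ 2 - q * (L - K) ^ 2 + L ^ 2 * q ^ 2 / κ
          - q * (L ^ 2 - K ^ 2)) = (q * L - κ * (L - K)) ^ 2 := by
        field_simp; ring
      nlinarith [mul_pos hκ' hκ']
    · push_neg at hq
      simp only [if_neg (not_le.mpr hq)]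
      rw [abs_of_neg hq]
      have h2 : 0 ≤ (q * K - κ * (L - K)) ^ 2 := sq_nonneg _
      have h3 : κ * (κ * (L - K) ^ 2 + q * (L - K) ^ 2 + K ^ 2 * q ^ 2 / κ
          - q * (L ^ 2 - K ^ 2)) = (q * K - κ * (L - K)) ^ 2 := by
        field_simp; ring
      nlinarith [mul_pos hκ' hκ']
  have expand : κ * (1 - α) * (L - K) ^ 2 = (κ - α * |q|) * (L - K) ^ 2
      - α * (κ * (L - K) ^ 2 - |q| * (L - K) ^ 2
        + (if 0 ≤ q then uL else uK) * q ^ 2 / κ - q * (uL - uK))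
      + (α / κ * ((if 0 ≤ q then uL else uK) * q ^ 2) - α * (q * (uL - uK))) := by
    field_simp
    split_ifs <;> ring
  linarith [h1, key]

/-- the discrete Fisher information is controlled by the entropy
production terms. -/
theorem fisher_information_bound {d n : ℕ} (M : Fin d → ℕ) [∀ ℓ, NeZero (M ℓ)]
    (κ : ℝ) (hκ : 0 < κ)
    (B : ℝ → ℝ) (α : ℝ) (hB : H2 B) (hB3 : H3 B α)
    (u p : Fin n → Cell M → ℝ) (hu : ∀ i K, 0 ≤ u i K) :
    κ * (1 - α) * Fisher M u
      ≤ (1/4) * PB M κ B u p + (α/κ) * PR M u p - α * Xc M u p := by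
  obtain ⟨hα0, hα1, hB3⟩ := hB3
  have hconv : ∀ (f g h : Fin n → Cell M → Fin d → ℝ),
    (1/4) * (4 * ∑ i, ∑ K : Cell M, ∑ ℓ : Fin d, f i K ℓ)
      + (α/κ) * (∑ i, ∑ K : Cell M, ∑ ℓ : Fin d, g i K ℓ)
      - α * (∑ i, ∑ K : Cell M, ∑ ℓ : Fin d, h i K ℓ)
    = ∑ i, ∑ K : Cell M, ∑ ℓ : Fin d,
        (f i K ℓ + (α/κ) * g i K ℓ - α * h i K ℓ) := by
    intro f g h
    simp only [Finset.mul_sum, ← Finset.sum_sub_distrib, ← Finset.sum_add_distrib]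
    refine Finset.sum_congr rfl fun _ _ => Finset.sum_congr rfl fun _ _ =>
      Finset.sum_congr rfl fun _ _ => by ring
  rw [Fisher, PB, PR, Xc]
  rw [hconv (fun i K ℓ => τ M ℓ * Bk κ B |p i (shift M K ℓ 1) - p i K| *
        (Real.sqrt (u i (shift M K ℓ 1)) - Real.sqrt (u i K)) ^ 2)
      (fun i K ℓ => τ M ℓ * upw (u i) (p i) K (shift M K ℓ 1) *
        (p i (shift M K ℓ 1) - p i K) ^ 2)
      (fun i K ℓ => τ M ℓ * (p i (shift M K ℓ 1) - p i K) *
        (u i (shift M K ℓ 1) - u i K))]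
  rw [Finset.mul_sum]
  refine Finset.sum_le_sum fun i _ => ?_
  rw [Finset.mul_sum]
  refine Finset.sum_le_sum fun K _ => ?_
  rw [Finset.mul_sum]
  refine Finset.sum_le_sum fun ℓ _ => ?_
  set q := p i (shift M K ℓ 1) - p i K with hq
  have hτ := tau_nonneg M ℓ
  have hb : κ - α * |q| ≤ Bk κ B |q| := by
    have h := hB3 (|q| / κ) (by positivity)
    have : κ * (1 - α * (|q| / κ)) ≤ κ * B (|q| / κ) :=
      mul_le_mul_of_nonneg_left h (le_of_lt hκ)
    rw [Bk]
    calc κ - α * |q| = κ * (1 - α * (|q| / κ)) := by field_simp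
      _ ≤ κ * B (|q| / κ) := this
  have key := edge_ineq κ α (Bk κ B |q|) q (u i K) (u i (shift M K ℓ 1))
    hκ hα0 hb (hu i K) (hu i (shift M K ℓ 1))
  have := mul_le_mul_of_nonneg_left key hτ
  unfold upw
  rw [← hq]
  nlinarith [this]


end SG
end

section
/- On the Cartesian torus grid, let W_{ij} ∈ L¹(T^d) (i,j = 1,…,n) satisfy the symmetry W_{ij}(x) = W_{ji}(−x) for a.e. x ∈ T^d and the positive semidefiniteness ∑_{i,j=1}^n ∫_{T^d}∫_{T^d} W_{ij}(x−y)·v_i(x)·v_j(y) dx dy ≥ 0 for all v_1,…,v_n ∈ L²(T^d). Let u_i : G → ℝ and let p_i be the fully implicit discrete potential p_i(K) = ∑_{j=1}^n ∑_{J∈G} m(J)·W^{ij}_{KJ}·u_j(J). Then the discrete cross term is nonnegative: X(u,p) = ∑_{i=1}^n ∑_{σ∈E} τ_σ·(D_{K,σ}p_i)·(D_{K,σ}u_i) ≥ 0. -/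
open MeasureTheory Real Finset

namespace SG

variable {d : ℕ}

/-!
Let `e_ℓ` be the unit step of the grid in direction `ℓ`. The discrete kernels are box averages of
a convolution kernel, so they are invariant under translating both cells by `e_ℓ`; hence the
difference `D_ℓ p_i` of the potential is the potential generated by the differences `D_ℓ u_j`.
The `ℓ`-th part of `X(u,p)` is therefore `τ_ℓ` times the discrete quadratic form of the kernels
evaluated at `D_ℓ u`, and this form is `m(K)⁻¹ ∑ᵢⱼ ∫∫ W_{ij}(x-y) vᵢ(x) vⱼ(y)` for the functions
`vᵢ` equal to `D_ℓ uᵢ` on each box, which is nonnegative by positive semidefiniteness.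
-/

open scoped fwdDiff

section ConvolutionKernel

lemma integral_mul_sum_indicator {α ι : Type*} [MeasurableSpace α] {μ : Measure α} [Fintype ι]
    {g : α → ℝ} (hg : Integrable g μ) {s : ι → Set α} (hs : ∀ i, MeasurableSet (s i))
    (b : ι → ℝ) :
    ∫ x, g x * ∑ i, (s i).indicator (fun _ => b i) x ∂μ = ∑ i, b i * ∫ x in s i, g x ∂μ := by
  simp_rw [Finset.mul_sum, ← Set.indicator_mul_right]
  rw [integral_finsetSum _ fun i _ => (hg.mul_const (b i)).indicator (hs i)]
  refine Finset.sum_congr rfl fun i _ => ?_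
  rw [integral_indicator (hs i), integral_mul_const, mul_comm]

variable {G : Type*} [AddCommGroup G] [MeasurableSpace G] [MeasurableAdd₂ G] [MeasurableNeg G]
  {μ : Measure G} [IsFiniteMeasure μ] [μ.IsAddLeftInvariant] {W : G → ℝ}

lemma integrable_setIntegral_comp_sub (hW : Integrable W μ) {t : Set G} (ht : MeasurableSet t) :
    Integrable (fun x => ∫ y in t, W (x - y) ∂μ) μ := by
  have ht1 : Integrable (t.indicator fun _ => (1 : ℝ)) μ := (integrable_const 1).indicator ht
  convert (ht1.convolution_integrand (ContinuousLinearMap.mul ℝ ℝ) hW).integral_prod_left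
    using 2 with x
  rw [← integral_indicator ht]
  congr 1 with y
  by_cases hy : y ∈ t <;> simp [hy]

lemma integral_integral_sub_mul_sum_indicator [μ.IsNegInvariant] {ι : Type*} [Fintype ι]
    (hW : Integrable W μ) {s : ι → Set G} (hs : ∀ i, MeasurableSet (s i)) (a b : ι → ℝ) :
    ∫ x, ∫ y, W (x - y) * (∑ i, (s i).indicator (fun _ => a i) x)
        * (∑ j, (s j).indicator (fun _ => b j) y) ∂μ ∂μ
      = ∑ i, ∑ j, a i * b j * ∫ x in s i, ∫ y in s j, W (x - y) ∂μ ∂μ := by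
  have hinner : ∀ x, ∫ y, W (x - y) * (∑ i, (s i).indicator (fun _ => a i) x)
        * (∑ j, (s j).indicator (fun _ => b j) y) ∂μ
      = (∑ j, b j * ∫ y in s j, W (x - y) ∂μ) * ∑ i, (s i).indicator (fun _ => a i) x := by
    intro x
    rw [← integral_mul_sum_indicator (hW.comp_sub_left x) hs, ← integral_mul_const]
    congr 1 with y
    ring
  have hint : ∀ j, Integrable (fun x => b j * ∫ y in s j, W (x - y) ∂μ) μ :=
    fun j => (integrable_setIntegral_comp_sub hW (hs j)).const_mul _
  simp_rw [hinner]
  rw [integral_mul_sum_indicator (integrable_finsetSum _ fun j _ => hint j) hs]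
  refine Finset.sum_congr rfl fun i _ => ?_
  rw [integral_finsetSum _ fun j _ => (hint j).integrableOn, Finset.mul_sum]
  refine Finset.sum_congr rfl fun j _ => ?_
  rw [integral_const_mul]
  ring

end ConvolutionKernel

section CircleArcs

variable {p : ℝ}

lemma measurableSet_image_coe_Ico [Fact (0 < p)] {a b : ℝ} (h : b ≤ a + p) :
    MeasurableSet ((fun t : ℝ => (t : AddCircle p)) '' Set.Ico a b) :=
  measurableSet_Ico.image_of_continuousOn_injOn (AddCircle.continuous_mk' p).continuousOn
    fun _ hx _ hy => (AddCircle.coe_eq_coe_iff_of_mem_Ico ⟨hx.1, hx.2.trans_le h⟩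
      ⟨hy.1, hy.2.trans_le h⟩).1

lemma image_coe_Ico_add (a b c : ℝ) :
    (fun t : ℝ => (t : AddCircle p)) '' Set.Ico (a + c) (b + c)
      = (· + (c : AddCircle p)) '' ((fun t : ℝ => (t : AddCircle p)) '' Set.Ico a b) := by
  rw [← Set.image_add_const_Ico, Set.image_image, Set.image_image]
  simp only [AddCircle.coe_add]

lemma image_coe_Ico_add_intCast (a b : ℝ) (m : ℤ) :
    (fun t : ℝ => (t : AddCircle (1 : ℝ))) '' Set.Ico (a + m) (b + m)
      = (fun t : ℝ => (t : AddCircle (1 : ℝ))) '' Set.Ico a b := by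
  have hm : ((m : ℝ) : AddCircle (1 : ℝ)) = 0 := (AddCircle.coe_eq_zero_iff _).2 ⟨m, by simp⟩
  rw [image_coe_Ico_add, hm]
  simp

lemma image_coe_Ico_val_add {N : ℕ} [NeZero N] (k j : ZMod N) :
    (fun t : ℝ => (t : AddCircle (1 : ℝ))) '' Set.Ico ((k + j).val / N) (((k + j).val + 1) / N)
      = (· + (((j.val : ℝ) / N : ℝ) : AddCircle (1 : ℝ))) ''
          ((fun t : ℝ => (t : AddCircle (1 : ℝ))) '' Set.Ico (k.val / N) ((k.val + 1) / N)) := by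
  have hN : (N : ℝ) ≠ 0 := Nat.cast_ne_zero.2 (NeZero.ne N)
  obtain ⟨q, hval⟩ : ∃ q : ℕ, ((k + j).val : ℝ) = k.val + j.val - N * q := by
    refine ⟨(k.val + j.val) / N, ?_⟩
    rw [ZMod.val_add, eq_sub_iff_add_eq]
    exact_mod_cast Nat.mod_add_div _ _
  rw [← image_coe_Ico_add, ← image_coe_Ico_add_intCast _ _ q]
  congr 2 <;> (rw [hval]; push_cast; field_simp; ring)

end CircleArcs

section TorusGrid

instance : (volume : Measure (Td d)).IsNegInvariant :=
  Measure.IsAddHaarMeasure.isNegInvariant_of_regular _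

noncomputable def corner (M : Fin d → ℕ) (K : Cell M) : Td d :=
  fun ℓ => (((K ℓ).val : ℝ) / M ℓ : ℝ)

variable (M : Fin d → ℕ) {n : ℕ}

lemma τ_nonneg (ℓ : Fin d) : 0 ≤ τ M ℓ := by
  unfold τ mK
  positivity

lemma shift_one (K : Cell M) (ℓ : Fin d) : shift M K ℓ 1 = K + Pi.single ℓ 1 := by
  ext m
  by_cases hm : m = ℓ
  · subst hm
    simp [shift]
  · simp [shift, hm]

variable [∀ ℓ, NeZero (M ℓ)]

lemma mK_pos : 0 < mK M :=
  Finset.prod_pos fun ℓ _ => inv_pos.2 (Nat.cast_pos.2 (NeZero.pos (M ℓ)))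

lemma measurableSet_QK (K : Cell M) : MeasurableSet (QK M K) := by
  refine MeasurableSet.univ_pi fun ℓ => measurableSet_image_coe_Ico ?_
  rw [add_div]
  gcongr
  exact (div_le_one (Nat.cast_pos.2 (NeZero.pos (M ℓ)))).2 (Nat.one_le_cast.2 NeZero.one_le)

lemma preimage_add_corner_QK (K e : Cell M) :
    (· + corner M e) ⁻¹' QK M (K + e) = QK M K := by
  ext x
  simp only [Set.mem_preimage, QK, Set.mem_univ_pi, Pi.add_apply, image_coe_Ico_val_add]
  exact forall_congr' fun ℓ => (add_left_injective _).mem_set_image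

lemma setIntegral_QK_add (K e : Cell M) (f : Td d → ℝ) :
    ∫ x in QK M (K + e), f x = ∫ x in QK M K, f (x + corner M e) := by
  conv_rhs => rw [← preimage_add_corner_QK M K e]
  exact ((measurePreserving_add_right volume (corner M e)).setIntegral_preimage_emb
    (measurableEmbedding_addRight _) f _).symm

lemma Wdisc_add_add (W : Td d → ℝ) (K J e : Cell M) :
    Wdisc M W (K + e) (J + e) = Wdisc M W K J := by
  simp only [Wdisc, setIntegral_QK_add, add_sub_add_right_eq_sub]

lemma Xc_eq_sum_fwdDiff (u p : Fin n → Cell M → ℝ) :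
    Xc M u p = ∑ ℓ, τ M ℓ *
      ∑ i, ∑ K, Δ_[(Pi.single ℓ 1 : Cell M)] (p i) K * Δ_[(Pi.single ℓ 1 : Cell M)] (u i) K := by
  simp only [Xc, fwdDiff, shift_one, Finset.mul_sum, mul_assoc]
  conv_lhs => enter [2, i]; rw [Finset.sum_comm]
  exact Finset.sum_comm

lemma fwdDiff_pot {Wd : Fin n → Fin n → Cell M → Cell M → ℝ} {e : Cell M}
    (hWd : ∀ i j K J, Wd i j (K + e) (J + e) = Wd i j K J) (u : Fin n → Cell M → ℝ) (i : Fin n) :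
    Δ_[e] (pot M Wd u i) = pot M Wd (fun j => Δ_[e] (u j)) i := by
  ext K
  simp only [fwdDiff, pot, ← Finset.sum_sub_distrib]
  refine Finset.sum_congr rfl fun j _ => ?_
  have hreindex :
      ∑ J, mK M * Wd i j (K + e) J * u j J = ∑ J, mK M * Wd i j K J * u j (J + e) := by
    rw [← Equiv.sum_comp (Equiv.addRight e)]
    simp only [Equiv.coe_addRight, hWd]
  rw [Finset.sum_sub_distrib, hreindex, ← Finset.sum_sub_distrib]
  exact Finset.sum_congr rfl fun J _ => by ring

lemma sum_pot_Wdisc_mul_self (W : Fin n → Fin n → Td d → ℝ) (hW : ∀ i j, Integrable (W i j))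
    (w : Fin n → Cell M → ℝ) :
    ∑ i, ∑ K, pot M (fun i j => Wdisc M (W i j)) w i K * w i K
      = (mK M)⁻¹ * ∑ i, ∑ j, ∫ x, ∫ y, W i j (x - y)
          * (∑ K, (QK M K).indicator (fun _ => w i K) x)
          * (∑ J, (QK M J).indicator (fun _ => w j J) y) := by
  have hm := (mK_pos M).ne'
  simp_rw [integral_integral_sub_mul_sum_indicator (hW _ _) (measurableSet_QK M)]
  simp only [pot, Wdisc, Finset.mul_sum, Finset.sum_mul]
  refine Finset.sum_congr rfl fun i _ => ?_
  rw [Finset.sum_comm]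
  refine Finset.sum_congr rfl fun j _ => Finset.sum_congr rfl fun K _ =>
    Finset.sum_congr rfl fun J _ => ?_
  field_simp

end TorusGrid

theorem cross_term_nonneg_general {d n : ℕ} (M : Fin d → ℕ) [∀ ℓ, NeZero (M ℓ)]
    (W : Fin n → Fin n → Td d → ℝ)
    (hW : ∀ i j, MeasureTheory.Integrable (W i j))
    (hpsd : ∀ v : Fin n → Td d → ℝ, (∀ i, MeasureTheory.MemLp (v i) 2) →
      0 ≤ ∑ i, ∑ j, ∫ x : Td d, ∫ y : Td d, W i j (x - y) * v i x * v j y)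
    (u : Fin n → Cell M → ℝ) :
    0 ≤ Xc M u (pot M (fun i j => Wdisc M (W i j)) u) := by
  rw [Xc_eq_sum_fwdDiff]
  refine Finset.sum_nonneg fun ℓ _ => mul_nonneg (τ_nonneg M ℓ) ?_
  simp_rw [fwdDiff_pot M (fun i j K J => Wdisc_add_add M (W i j) K J _) u,
    sum_pot_Wdisc_mul_self M W hW]
  refine mul_nonneg (inv_nonneg.2 (mK_pos M).le) (hpsd _ fun i => ?_)
  exact memLp_finsetSum _ fun K _ =>
    memLp_indicator_const 2 (measurableSet_QK M K) _ (Or.inr (measure_ne_top _ _))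

/-- nonnegativity of the discrete cross term for symmetric positive
semidefinite kernels and fully implicit potentials. -/
theorem cross_term_nonneg {d n : ℕ} (M : Fin d → ℕ) [∀ ℓ, NeZero (M ℓ)]
    (W : Fin n → Fin n → Td d → ℝ)
    (hW : ∀ i j, MeasureTheory.Integrable (W i j))
    (hsym : ∀ i j, ∀ᵐ x : Td d, W i j x = W j i (-x))
    (hpsd : ∀ v : Fin n → Td d → ℝ, (∀ i, MeasureTheory.MemLp (v i) 2) →
      0 ≤ ∑ i, ∑ j, ∫ x : Td d, ∫ y : Td d, W i j (x - y) * v i x * v j y)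
    (u : Fin n → Cell M → ℝ) :
    0 ≤ Xc M u (pot M (fun i j => Wdisc M (W i j)) u) :=
  cross_term_nonneg_general M W hW hpsd u

end SG
end
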